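/- arXiv:2301.01897 — 2 statements merged into one kernel-verified Lean document; each statement's English description precedes it below -/
import Mathlib

section
/- Let A be an abelian category with enough projectives that is ultimately-closed (every object is ultimately-closed). Then the singularity category D_sg(A) has no nonzero presilting object: every object X of D_sg(A) with Hom(X, Σ^n X) = 0 for all n > 0 is a zero object. -/
open CategoryTheory Limits Pretriangulated

noncomputable section

namespace SingPaper

variable {A : Type*} [Category A] [Abelian A] [EnoughProjectives A]

/-- A chosen first syzygy `Ω(M)`: the kernel of the chosen epimorphism
`Projective.π M : Projective.over M ⟶ M` from a projective object. -/
def syz (M : A) : A := kernel (Projective.π M)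

/-- Iterated syzygies `Ω^d(M)`. -/
def syzPow (d : ℕ) (M : A) : A := match d with
  | 0 => M
  | n + 1 => syz (syzPow n M)

/-- `extClosure M` is the class of objects of `⟨M⟩`, the smallest full subcategory of `A`
containing `M` and all projective objects which is closed under direct summands and
extensions. -/
inductive extClosure (M : A) : A → Prop
  | self : extClosure M M
  | proj (P : A) : Projective P → extClosure M P
  | summand (X Y : A) (s : X ⟶ Y) (r : Y ⟶ X) :
      s ≫ r = 𝟙 X → extClosure M Y → extClosure M X
  | ext (X Y Z : A) (f : X ⟶ Y) (g : Y ⟶ Z) (w : f ≫ g = 0) :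
      (ShortComplex.mk f g w).ShortExact →
      extClosure M X → extClosure M Z → extClosure M Y

/-- `M` has finite projective dimension iff some iterated syzygy is projective. -/
def HasFiniteProjDim (M : A) : Prop := ∃ n : ℕ, Projective (syzPow n M)

/-- `M` is virtually `d`-periodic: it has infinite projective dimension and
`Ω^d(M)` belongs to `⟨M⟩`. -/
def VirtuallyPeriodic (d : ℕ) (M : A) : Prop :=
  ¬ HasFiniteProjDim M ∧ extClosure M (syzPow d M)

attribute [local instance] Abelian.hasFiniteBiproducts

/-- `Y` belongs to `add X`: it is a direct summand of a finite direct sum of copies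
of `X`. -/
def inAdd (X Y : A) : Prop :=
  ∃ (n : ℕ) (s : Y ⟶ ⨁ (fun _ : Fin n => X)) (r : (⨁ fun _ : Fin n => X) ⟶ Y),
    s ≫ r = 𝟙 Y

/-- `X` and `Y` are isomorphic in the stable category `A` modulo projectives:
they become isomorphic after adding projective direct summands. -/
def StablyIso (X Y : A) : Prop :=
  ∃ P Q : A, Projective P ∧ Projective Q ∧ Nonempty (X ⊞ P ≅ Y ⊞ Q)

/-- `syzSum M e = M ⊕ Ω(M) ⊕ ⋯ ⊕ Ω^e(M)`. -/
def syzSum (M : A) : ℕ → A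
  | 0 => M
  | n + 1 => syzSum M n ⊞ syzPow (n + 1) M

/-- `M` is ultimately-closed: there is `d ≥ 1` such that `Ω^d(M)` is stably
isomorphic to an object of `add (M ⊕ Ω(M) ⊕ ⋯ ⊕ Ω^{d-1}(M))`. -/
def UltimatelyClosed (M : A) : Prop :=
  ∃ d : ℕ, 1 ≤ d ∧ ∃ X : A, inAdd (syzSum M (d - 1)) X ∧ StablyIso (syzPow d M) X

variable {T : Type*} [Category T] [Preadditive T] [HasZeroObject T] [HasShift T ℤ]
  [∀ n : ℤ, (shiftFunctor T n).Additive] [Pretriangulated T]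

/-- `ι : A ⥤ T` exhibits the triangulated category `T` as the singularity category
`D_sg(A) = D^b(A)/K^b(P)` of `A`; we record the characteristic properties of the
composite functor `A ⥤ D^b(A) ⥤ D_sg(A)` sending an object to the corresponding
stalk complex in degree `0`. -/
structure IsSingularityCategory (ι : A ⥤ T) : Prop where
  /-- projective objects of `A` become zero objects in `D_sg(A)` -/
  proj_isZero : ∀ P : A, Projective P → IsZero (ι.obj P)
  /-- any short exact sequence in `A` induces a distinguished triangle in `D_sg(A)` -/
  ses_triangle : ∀ {X Y Z : A} (f : X ⟶ Y) (g : Y ⟶ Z) (w : f ≫ g = 0),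
      (ShortComplex.mk f g w).ShortExact →
      ∃ h : ι.obj Z ⟶ (ι.obj X)⟦(1 : ℤ)⟧,
        Triangle.mk (ι.map f) (ι.map g) h ∈ distTriang T
  /-- an object of `A` becomes zero in `D_sg(A)` iff it has finite projective dimension -/
  isZero_iff : ∀ M : A, IsZero (ι.obj M) ↔ HasFiniteProjDim M
  /-- every object of `D_sg(A)` is isomorphic to a shift of a stalk complex -/
  obj_surj : ∀ X : T, ∃ (M : A) (n : ℤ), Nonempty (X ≅ (ι.obj M)⟦n⟧)

/-!
Write `X ≅ ι(M)⟦n⟧`; then `ι(M)` is presilting as well. As `ι(M) ≅ ι(Ωⁱ M)⟦i⟧`, this gives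
`Hom(ι M, ι(Ωⁱ M)⟦k⟧) = 0` for `k > i`, hence `Hom(ι M, ι N⟦k⟧) = 0` for all `k ≥ d` and all `N` in
the extension closure of `M ⊕ Ω M ⊕ ⋯ ⊕ Ω^{d-1} M`, because short exact sequences become
triangles and projectives become zero. Ultimate closedness puts some `N` stably isomorphic to
`Ω^d M` in this class; then `ι M ≅ ι(Ω^d M)⟦d⟧ ≅ ι(N)⟦d⟧` is a zero isomorphism, so `ι M = 0`.
-/

section Shift

variable {C : Type*} [Category C] [Preadditive C] [HasShift C ℤ]

def IsPresilting (X : C) : Prop := ∀ n : ℤ, 0 < n → ∀ f : X ⟶ X⟦n⟧, f = 0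

def ShiftedHomsVanish (Y Z : C) (d : ℤ) : Prop := ∀ k : ℤ, d ≤ k → ∀ f : Y ⟶ Z⟦k⟧, f = 0

lemma IsPresilting.of_iso {X Y : C} (e : X ≅ Y) (hX : IsPresilting X) : IsPresilting Y := by
  intro m hm f
  rw [← cancel_epi e.hom, ← cancel_mono ((shiftFunctor C m).map e.inv), comp_zero, zero_comp]
  exact hX m hm _

lemma IsPresilting.of_shift [∀ n : ℤ, (shiftFunctor C n).Additive] {X : C} (n : ℤ)
    (hX : IsPresilting (X⟦n⟧)) : IsPresilting X := by
  intro m hm f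
  apply (shiftFunctor C n).map_injective
  rw [Functor.map_zero, ← cancel_mono (shiftComm X m n).hom, zero_comp]
  exact hX m hm _

lemma IsPresilting.shiftedHomsVanish {Y Z : C} (hY : IsPresilting Y) {i : ℤ} (e : Z⟦i⟧ ≅ Y) :
    ShiftedHomsVanish Y Z (i + 1) := by
  intro k hk f
  let φ : Z⟦k⟧ ≅ Y⟦k - i⟧ :=
    (shiftFunctorAdd' C i (k - i) k (by omega)).app Z ≪≫ (shiftFunctor C (k - i)).mapIso e
  rw [← cancel_mono φ.hom, zero_comp]
  exact hY _ (by omega) _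

lemma ShiftedHomsVanish.mono {Y Z : C} {d d' : ℤ} (h : ShiftedHomsVanish Y Z d) (hd : d ≤ d') :
    ShiftedHomsVanish Y Z d' :=
  fun k hk => h k (hd.trans hk)

lemma ShiftedHomsVanish.of_isZero [∀ n : ℤ, (shiftFunctor C n).Additive] (Y : C) {Z : C}
    (hZ : IsZero Z) (d : ℤ) : ShiftedHomsVanish Y Z d :=
  fun k _ f => ((shiftFunctor C k).map_isZero hZ).eq_of_tgt f 0

lemma ShiftedHomsVanish.of_retract {Y Z W : C} {d : ℤ} (s : Z ⟶ W) (r : W ⟶ Z) (hsr : s ≫ r = 𝟙 Z)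
    (h : ShiftedHomsVanish Y W d) : ShiftedHomsVanish Y Z d := by
  intro k hk f
  have : f = (f ≫ s⟦k⟧') ≫ r⟦k⟧' := by
    rw [Category.assoc, ← Functor.map_comp, hsr, (shiftFunctor C k).map_id, Category.comp_id]
  rw [this, h k hk (f ≫ s⟦k⟧'), zero_comp]

lemma ShiftedHomsVanish.isZero_of_iso {Y Z : C} {d : ℤ} (h : ShiftedHomsVanish Y Z d)
    (e : Y ≅ Z⟦d⟧) : IsZero Y := by
  rw [IsZero.iff_id_eq_zero, ← e.hom_inv_id, h d le_rfl e.hom, zero_comp]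

lemma ShiftedHomsVanish.of_distinguished [HasZeroObject C] [∀ n : ℤ, (shiftFunctor C n).Additive]
    [Pretriangulated C] {Y : C} {d : ℤ} (Tr : Triangle C) (hTr : Tr ∈ distTriang C)
    (h₁ : ShiftedHomsVanish Y Tr.obj₁ d)
    (h₃ : ShiftedHomsVanish Y Tr.obj₃ d) : ShiftedHomsVanish Y Tr.obj₂ d := by
  intro k hk φ
  have hTrk := Triangle.shift_distinguished _ hTr k
  rw [Triangle.shiftFunctor_eq] at hTrk
  obtain ⟨ψ, rfl⟩ := Triangle.coyoneda_exact₂ _ hTrk φ (by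
    change φ ≫ (k.negOnePow • Tr.mor₂⟦k⟧') = 0
    rw [Linear.comp_units_smul, h₃ k hk (φ ≫ Tr.mor₂⟦k⟧'), smul_zero])
  have hψ : ψ = 0 := h₁ k hk ψ
  rw [hψ]
  exact zero_comp

end Shift

section ExtClosure

variable {C : Type*} [Category C] [Abelian C]

lemma shortExact_biprod (X Y : C) :
    (ShortComplex.mk (biprod.inl : X ⟶ X ⊞ Y) biprod.snd biprod.inl_snd).ShortExact :=
  (ShortComplex.Splitting.ofHasBinaryBiproduct X Y).shortExact

lemma extClosure.biprod {M X Y : C} (hX : extClosure M X) (hY : extClosure M Y) :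
    extClosure M (X ⊞ Y) :=
  .ext X (X ⊞ Y) Y biprod.inl biprod.snd biprod.inl_snd (shortExact_biprod X Y) hX hY

lemma extClosure.biproduct_const (M : C) : ∀ n : ℕ, extClosure M (⨁ fun _ : Fin n => M)
  | 0 => .proj _ (IsZero.projective
      ((IsZero.iff_id_eq_zero _).2 (biproduct.hom_ext _ _ fun j => j.elim0)))
  | n + 1 => by
    refine .summand _ (M ⊞ ⨁ fun _ : Fin n => M)
      (biprod.lift (biproduct.π _ 0) (biproduct.lift fun i => biproduct.π _ i.succ))
      (biprod.desc (biproduct.ι (fun _ : Fin (n + 1) => M) 0)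
        (biproduct.desc fun i => biproduct.ι (fun _ : Fin (n + 1) => M) i.succ)) ?_
      ((extClosure.self).biprod (biproduct_const M n))
    rw [biprod.lift_desc, biproduct.lift_desc, ← biproduct.total, Fin.sum_univ_succ]

lemma extClosure_of_inAdd {M Y : C} (h : inAdd M Y) : extClosure M Y := by
  obtain ⟨n, s, r, hsr⟩ := h
  exact .summand Y _ s r hsr (extClosure.biproduct_const M n)

end ExtClosure

namespace IsSingularityCategory

variable {ι : A ⥤ T}

lemma isIso_map_inl (h : IsSingularityCategory ι) (N : A) {P : A} (hP : Projective P) :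
    IsIso (ι.map (biprod.inl : N ⟶ N ⊞ P)) := by
  obtain ⟨δ, hδ⟩ := h.ses_triangle biprod.inl biprod.snd biprod.inl_snd (shortExact_biprod N P)
  exact (Triangle.isZero₃_iff_isIso₁ _ hδ).1 (h.proj_isZero P hP)

lemma nonempty_iso_of_stablyIso (h : IsSingularityCategory ι) {N N' : A} (hN : StablyIso N N') :
    Nonempty (ι.obj N ≅ ι.obj N') := by
  obtain ⟨P, P', hP, hP', ⟨e⟩⟩ := hN
  have := h.isIso_map_inl N hP
  have := h.isIso_map_inl N' hP'
  exact ⟨asIso (ι.map biprod.inl) ≪≫ ι.mapIso e ≪≫ (asIso (ι.map biprod.inl)).symm⟩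

lemma nonempty_iso_shift_syz (h : IsSingularityCategory ι) (N : A) :
    Nonempty (ι.obj N ≅ (ι.obj (syz N))⟦(1 : ℤ)⟧) := by
  obtain ⟨δ, hδ⟩ := h.ses_triangle (kernel.ι (Projective.π N)) (Projective.π N)
    (kernel.condition _) { exact := ShortComplex.exact_of_f_is_kernel _ (kernelIsKernel _) }
  have : IsIso δ :=
    (Triangle.isZero₂_iff_isIso₃ _ hδ).1 (h.proj_isZero _ (Projective.projective_over N))
  exact ⟨@asIso _ _ _ _ δ this⟩

lemma nonempty_iso_shift_syzPow (h : IsSingularityCategory ι) (M : A) :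
    ∀ i : ℕ, Nonempty (ι.obj M ≅ (ι.obj (syzPow i M))⟦(i : ℤ)⟧)
  | 0 => ⟨(shiftFunctorZero T ℤ).symm.app (ι.obj M)⟩
  | i + 1 => by
    obtain ⟨e⟩ := h.nonempty_iso_shift_syzPow M i
    obtain ⟨e'⟩ := h.nonempty_iso_shift_syz (syzPow i M)
    exact ⟨e ≪≫ (shiftFunctor T (i : ℤ)).mapIso e' ≪≫
      (shiftFunctorAdd' T 1 (i : ℤ) ((i + 1 : ℕ) : ℤ) (by push_cast; ring)).symm.app _⟩

lemma shiftedHomsVanish_of_shortExact (h : IsSingularityCategory ι) {Y : T} {d : ℤ}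
    {X₁ X₂ X₃ : A} (f : X₁ ⟶ X₂) (g : X₂ ⟶ X₃) (w : f ≫ g = 0)
    (hfg : (ShortComplex.mk f g w).ShortExact) (h₁ : ShiftedHomsVanish Y (ι.obj X₁) d)
    (h₃ : ShiftedHomsVanish Y (ι.obj X₃) d) : ShiftedHomsVanish Y (ι.obj X₂) d := by
  obtain ⟨δ, hδ⟩ := h.ses_triangle f g w hfg
  exact .of_distinguished _ hδ h₁ h₃

lemma shiftedHomsVanish_biprod (h : IsSingularityCategory ι) {Y : T} {d : ℤ} {X₁ X₂ : A}
    (h₁ : ShiftedHomsVanish Y (ι.obj X₁) d) (h₂ : ShiftedHomsVanish Y (ι.obj X₂) d) :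
    ShiftedHomsVanish Y (ι.obj (X₁ ⊞ X₂)) d :=
  h.shiftedHomsVanish_of_shortExact _ _ _ (shortExact_biprod X₁ X₂) h₁ h₂

lemma shiftedHomsVanish_of_extClosure (h : IsSingularityCategory ι) {Y : T} {d : ℤ} {S N : A}
    (hS : ShiftedHomsVanish Y (ι.obj S) d) (hN : extClosure S N) :
    ShiftedHomsVanish Y (ι.obj N) d := by
  induction hN with
  | self => exact hS
  | proj P hP => exact .of_isZero Y (h.proj_isZero P hP) d
  | summand _ _ s r hsr _ ih =>
    exact .of_retract (ι.map s) (ι.map r) (by rw [← ι.map_comp, hsr, ι.map_id]) ih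
  | ext _ _ _ f g w hfg _ _ ih₁ ih₃ => exact h.shiftedHomsVanish_of_shortExact f g w hfg ih₁ ih₃

lemma shiftedHomsVanish_syzSum (h : IsSingularityCategory ι) {M : A}
    (hM : IsPresilting (ι.obj M)) : ∀ e : ℕ,
    ShiftedHomsVanish (ι.obj M) (ι.obj (syzSum M e)) ((e + 1 : ℕ) : ℤ)
  | 0 => hM.shiftedHomsVanish (h.nonempty_iso_shift_syzPow M 0).some.symm
  | e + 1 => by
    refine h.shiftedHomsVanish_biprod ((h.shiftedHomsVanish_syzSum hM e).mono ?_) ?_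
    · omega
    · exact hM.shiftedHomsVanish (h.nonempty_iso_shift_syzPow M (e + 1)).some.symm

end IsSingularityCategory

/-- If `A` is ultimately-closed, then the singularity category of `A` has no nonzero
presilting object: any object with no positive self-extensions is zero. -/
theorem presilting_isZero_of_ultimatelyClosed (huc : ∀ M : A, UltimatelyClosed M)
    (ι : A ⥤ T) (h : IsSingularityCategory ι)
    (X : T) (hX : ∀ n : ℤ, 0 < n → ∀ f : X ⟶ X⟦n⟧, f = 0) :
    IsZero X := by
  obtain ⟨M, n, ⟨eX⟩⟩ := h.obj_surj X
  have hM : IsPresilting (ι.obj M) := (IsPresilting.of_iso eX hX).of_shift n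
  obtain ⟨d, hd, X', hX', hstab⟩ := huc M
  have hvanish : ShiftedHomsVanish (ι.obj M) (ι.obj X') d := by
    have := h.shiftedHomsVanish_of_extClosure (h.shiftedHomsVanish_syzSum hM (d - 1))
      (extClosure_of_inAdd hX')
    rwa [Nat.sub_add_cancel hd] at this
  obtain ⟨e₁⟩ := h.nonempty_iso_shift_syzPow M d
  obtain ⟨e₂⟩ := h.nonempty_iso_of_stablyIso hstab
  have hMzero : IsZero (ι.obj M) :=
    hvanish.isZero_of_iso (e₁ ≪≫ (shiftFunctor T (d : ℤ)).mapIso e₂)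
  exact ((shiftFunctor T n).map_isZero hMzero).of_iso eX

end SingPaper
end
end

section
/- If A is an abelian category with enough projectives that is syzygy-finite (there exist d ≥ 1 and an object E with Ω^d(A) ⊆ add E) and A has infinite global dimension, then E is a virtually d-periodic object. -/
open CategoryTheory Limits Pretriangulated

noncomputable section

namespace SingPaper

variable {A : Type*} [Category A] [Abelian A] [EnoughProjectives A]

/-- The abelian category `A` has finite global dimension: there is a uniform bound `n`
such that every object has projective dimension at most `n`, i.e. `Ω^n(M)` is
projective for every `M`. -/
def HasFiniteGlobalDimension (A : Type*) [Category A] [Abelian A] [EnoughProjectives A] :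
    Prop :=
  ∃ n : ℕ, ∀ M : A, Projective (syzPow n M)

attribute [local instance] Abelian.hasFiniteBiproducts

/- Projective dimension is measured by the vanishing of `Ext` (`HasProjectiveDimensionLT`);
dimension shifting along `0 → Ω(M) → P → M → 0` shows that `Ω^n(M)` is projective iff
`pd M ≤ n`. If `pd E` were finite, every `Ω^d(M)`, lying in `add E`, would have projective
dimension at most `pd E`, so the global dimension would be at most `pd E + d`. And
`Ω^d(E) ∈ add E ⊆ ⟨E⟩`. -/

end SingPaper

namespace SingPaper

attribute [local instance] Abelian.hasFiniteBiproducts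

variable {A : Type*} [Category A] [Abelian A]

def biproductFinSuccIso {k : ℕ} (f : Fin (k + 1) → A) :
    (⨁ f) ≅ f 0 ⊞ ⨁ (fun j : Fin k => f j.succ) where
  hom := biprod.lift (biproduct.π f 0) (biproduct.lift fun j => biproduct.π f j.succ)
  inv := biprod.desc (biproduct.ι f 0) (biproduct.desc fun j => biproduct.ι f j.succ)
  hom_inv_id := by
    rw [biprod.lift_desc, biproduct.lift_desc, ← biproduct.total, Fin.sum_univ_succ]
  inv_hom_id := by
    ext <;> simp [biproduct.ι_π, eq_comm (a := (0 : Fin (k + 1)))]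

lemma prop_biproduct_fin (P : ObjectProperty A) (zero : ∀ X, IsZero X → P X)
    (iso : ∀ {X Y : A}, (X ≅ Y) → P Y → P X) (biprod : ∀ X Y, P X → P Y → P (X ⊞ Y)) :
    ∀ {k : ℕ} (f : Fin k → A), (∀ j, P (f j)) → P (⨁ f)
  | 0, _, _ => zero _ <| (IsZero.iff_id_eq_zero _).2 <| biproduct.hom_ext' _ _ fun j => j.elim0
  | _ + 1, f, hf => iso (biproductFinSuccIso f) <| biprod _ _ (hf 0) <|
      prop_biproduct_fin P zero iso biprod _ fun j => hf j.succ

lemma hasProjectiveDimensionLT_of_inAdd {E N : A} (hN : inAdd E N) (n : ℕ)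
    [HasProjectiveDimensionLT E n] : HasProjectiveDimensionLT N n := by
  obtain ⟨k, s, r, hsr⟩ := hN
  have : HasProjectiveDimensionLT (⨁ fun _ : Fin k => E) n :=
    prop_biproduct_fin (HasProjectiveDimensionLT · n)
      (fun X hX => have := hX.hasProjectiveDimensionLT_zero
        hasProjectiveDimensionLT_of_ge X 0 n n.zero_le)
      (fun e hY => @hasProjectiveDimensionLT_of_iso _ _ _ _ _ e.symm n hY)
      (fun X Y _ _ => inferInstance) _ fun _ => inferInstance
  exact Retract.hasProjectiveDimensionLT ⟨s, r, hsr⟩ n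

lemma extClosure_biprod {M X Y : A} (hX : extClosure M X) (hY : extClosure M Y) :
    extClosure M (X ⊞ Y) :=
  .ext X (X ⊞ Y) Y biprod.inl biprod.snd biprod.inl_snd
    (ShortComplex.Splitting.ofHasBinaryBiproduct X Y).shortExact hX hY

lemma extClosure_of_inAdd_s9 {E N : A} (hN : inAdd E N) : extClosure E N := by
  obtain ⟨k, s, r, hsr⟩ := hN
  have : extClosure E (⨁ fun _ : Fin k => E) :=
    prop_biproduct_fin (extClosure E) (fun X hX => .proj X hX.projective)
      (fun e hY => .summand _ _ e.hom e.inv e.hom_inv_id hY) (fun _ _ => extClosure_biprod) _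
      fun _ => .self
  exact .summand N _ s r hsr this

open ZeroObject in
lemma stablyIso_refl (X : A) : StablyIso X X :=
  ⟨0, 0, inferInstance, inferInstance, ⟨Iso.refl _⟩⟩

variable [EnoughProjectives A]

lemma shortExact_syz (M : A) :
    (ShortComplex.mk (kernel.ι (Projective.π M)) (Projective.π M)
      (kernel.condition _)).ShortExact :=
  { exact := ShortComplex.exact_kernel _ }

lemma hasProjectiveDimensionLT_syz_iff (M : A) (k : ℕ) :
    HasProjectiveDimensionLT (syz M) (k + 1) ↔ HasProjectiveDimensionLT M (k + 2) :=
  ((shortExact_syz M).hasProjectiveDimensionLT_X₃_iff k inferInstance).symm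

lemma hasProjectiveDimensionLT_syzPow_iff (n k : ℕ) (M : A) :
    HasProjectiveDimensionLT (syzPow n M) (k + 1) ↔ HasProjectiveDimensionLT M (k + n + 1) := by
  induction n generalizing k with
  | zero => rfl
  | succ n ih =>
    rw [syzPow, hasProjectiveDimensionLT_syz_iff, ih, add_right_comm k 1 n, add_assoc k n 1]

lemma projective_syzPow_iff (n : ℕ) (M : A) :
    Projective (syzPow n M) ↔ HasProjectiveDimensionLT M (n + 1) := by
  rw [projective_iff_hasProjectiveDimensionLT_one, hasProjectiveDimensionLT_syzPow_iff, zero_add]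

lemma hasFiniteGlobalDimension_of_syzPow_inAdd {d : ℕ} {E : A}
    (hE : ∀ M : A, inAdd E (syzPow d M)) (hfin : HasFiniteProjDim E) :
    HasFiniteGlobalDimension A := by
  obtain ⟨n, hn⟩ := hfin
  have : HasProjectiveDimensionLT E (n + 1) := (projective_syzPow_iff n E).1 hn
  refine ⟨n + d, fun M => (projective_syzPow_iff _ M).2 ?_⟩
  exact (hasProjectiveDimensionLT_syzPow_iff d n M).1 (hasProjectiveDimensionLT_of_inAdd (hE M) _)

theorem virtuallyPeriodic_of_syzygyFinite_general (d : ℕ) (E : A)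
    (hE : ∀ N M : A, StablyIso N (syzPow d M) → inAdd E N)
    (h : ¬ HasFiniteGlobalDimension A) :
    VirtuallyPeriodic d E := by
  have hΩ : ∀ M : A, inAdd E (syzPow d M) := fun M => hE _ M (stablyIso_refl _)
  exact ⟨fun hfin => h (hasFiniteGlobalDimension_of_syzPow_inAdd hΩ hfin),
    extClosure_of_inAdd_s9 (hΩ E)⟩

/-- If `A` is syzygy-finite, witnessed by `d ≥ 1` and an object `E` with
`Ω^d(A) ⊆ add E`, and `A` has infinite global dimension, then `E` is virtually
`d`-periodic. -/
theorem virtuallyPeriodic_of_syzygyFinite (d : ℕ) (hd : 1 ≤ d) (E : A)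
    (hE : ∀ N M : A, StablyIso N (syzPow d M) → inAdd E N)
    (h : ¬ HasFiniteGlobalDimension A) :
    VirtuallyPeriodic d E :=
  virtuallyPeriodic_of_syzygyFinite_general d E hE h

end SingPaper
end
end
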